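/- arXiv:2308.01894 — 5 statements merged into one kernel-verified Lean document; each statement's English description precedes it below -/
import Mathlib

section
/- Let Ψ be an HPTP linear map from B(H) to B(K) (H, K finite-dimensional). Then Ψ is semi-nonnegative (there exists a density matrix ρ with Ψ(ρ) a density matrix) if and only if there exist CPTP maps Φ: B(H) → B(H) and Ξ: B(H) → B(K) with Ψ ∘ Φ = Ξ. -/
open Matrix
open scoped ComplexOrder

abbrev Mat (n : ℕ) : Type := Matrix (Fin n) (Fin n) ℂ

/-- Hermitian-preserving linear map. -/
def IsHP {n m : ℕ} (Ψ : Mat n →ₗ[ℂ] Mat m) : Prop :=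
  ∀ X : Mat n, X.IsHermitian → (Ψ X).IsHermitian

/-- Trace-preserving linear map. -/
def IsTP {n m : ℕ} (Ψ : Mat n →ₗ[ℂ] Mat m) : Prop :=
  ∀ X : Mat n, (Ψ X).trace = X.trace

/-- Density matrix: positive semidefinite with trace 1. -/
def IsDensity {n : ℕ} (ρ : Mat n) : Prop := ρ.PosSemidef ∧ ρ.trace = 1

/-- Completely positive map, via existence of a Kraus representation. -/
def IsCP {n m : ℕ} (Ψ : Mat n →ₗ[ℂ] Mat m) : Prop :=
  ∃ (r : ℕ) (A : Fin r → Matrix (Fin m) (Fin n) ℂ),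
    ∀ X : Mat n, Ψ X = ∑ i, A i * X * (A i)ᴴ

def IsCPTP {n m : ℕ} (Ψ : Mat n →ₗ[ℂ] Mat m) : Prop := IsCP Ψ ∧ IsTP Ψ

/-- Semi-positive: some positive definite density matrix is sent to a
positive definite density matrix. -/
def IsSP {n m : ℕ} (Ψ : Mat n →ₗ[ℂ] Mat m) : Prop :=
  ∃ ρ : Mat n, ρ.PosDef ∧ ρ.trace = 1 ∧ (Ψ ρ).PosDef ∧ (Ψ ρ).trace = 1

/-- Semi-nonnegative: some density matrix is sent to a density matrix. -/
def IsSN {n m : ℕ} (Ψ : Mat n →ₗ[ℂ] Mat m) : Prop :=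
  ∃ ρ : Mat n, IsDensity ρ ∧ IsDensity (Ψ ρ)

lemma posSemidef_sum {m : ℕ} {ι : Type*} (s : Finset ι) (f : ι → Mat m)
    (h : ∀ i ∈ s, (f i).PosSemidef) : (∑ i ∈ s, f i).PosSemidef :=
  Finset.sum_induction f _ (fun _ _ ha hb => ha.add hb) .zero h

lemma traceSmul_kraus {n m : ℕ} {ρ : Mat m} (hρ : ρ.PosSemidef) :
    ∃ (r : ℕ) (A : Fin r → Matrix (Fin m) (Fin n) ℂ),
      ∀ X : Mat n, X.trace • ρ = ∑ i, A i * X * (A i)ᴴ := by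
  obtain ⟨B, hB⟩ : ∃ B : Mat m, ρ = Bᴴ * B := by
    classical
    open scoped MatrixOrder in
    obtain ⟨B, hB⟩ := CStarAlgebra.nonneg_iff_eq_star_mul_self.mp hρ.nonneg
    exact ⟨B, hB⟩
  set F : Fin m × Fin n → Matrix (Fin m) (Fin n) ℂ :=
    fun p => Matrix.of fun a b => Bᴴ a p.1 * (if b = p.2 then 1 else 0) with hF
  refine ⟨m * n, F ∘ finProdFinEquiv.symm, fun X => ?_⟩
  have hsum : ∑ i : Fin (m * n), (fun p => F p * X * (F p)ᴴ) (finProdFinEquiv.symm i)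
      = ∑ p : Fin m × Fin n, F p * X * (F p)ᴴ :=
    Equiv.sum_comp finProdFinEquiv.symm (fun p => F p * X * (F p)ᴴ)
  simp only [Function.comp]
  rw [hsum]
  ext a c
  simp only [Matrix.sum_apply, Matrix.mul_apply, conjTranspose_apply, hF, of_apply,
    Matrix.smul_apply, smul_eq_mul, trace, diag, hB]
  rw [Fintype.sum_prod_type]
  simp only [star_mul', star_one, star_zero, mul_ite, mul_zero, mul_one,
    ite_mul, zero_mul, Finset.sum_ite_eq', Finset.mem_univ, if_true]
  rw [Finset.sum_comm]
  rw [Finset.sum_mul]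
  congr 1
  ext i
  rw [Finset.mul_sum]
  congr 1
  ext k
  simp [apply_ite (starRingEnd ℂ), Finset.sum_ite_eq', mul_comm, mul_assoc, mul_left_comm]

lemma cptp_density {n m : ℕ} {Ξ : Mat n →ₗ[ℂ] Mat m} (h : IsCPTP Ξ) {ρ : Mat n}
    (hρ : IsDensity ρ) : IsDensity (Ξ ρ) := by
  obtain ⟨⟨r, A, hA⟩, hTP⟩ := h
  refine ⟨?_, by rw [hTP]; exact hρ.2⟩
  rw [hA]
  exact posSemidef_sum _ _ fun i _ => hρ.1.mul_mul_conjTranspose_same (A i)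

lemma density_uniform {n : ℕ} [NeZero n] : IsDensity (((n : ℂ)⁻¹) • 1 : Mat n) := by
  have hc : (0:ℂ) ≤ (n : ℂ)⁻¹ := by
    rw [show ((n:ℂ))⁻¹ = (((n:ℝ)⁻¹ : ℝ) : ℂ) by push_cast; ring]
    exact_mod_cast inv_nonneg.mpr (Nat.cast_nonneg n)
  refine ⟨⟨?_, fun x => ?_⟩, ?_⟩
  · have : IsSelfAdjoint ((n:ℂ)⁻¹) := by
      rw [show ((n:ℂ))⁻¹ = (((n:ℝ)⁻¹ : ℝ) : ℂ) by push_cast; ring]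
      exact by rw [_root_.IsSelfAdjoint, Complex.star_def]; exact Complex.conj_ofReal _
    simpa [IsHermitian, conjTranspose_smul, this.star_eq] using rfl
  · exact (Matrix.PosSemidef.one.smul hc : PosSemidef ((n:ℂ)⁻¹ • (1 : Mat n))).2 x
  · have hn : (n:ℂ) ≠ 0 := by exact_mod_cast (NeZero.ne n)
    simp [trace_smul, trace_one, inv_mul_cancel₀ hn]


/-- An HPTP map `Ψ` is semi-nonnegative iff there are CPTP maps
`Φ` and `Ξ` with `Ψ ∘ Φ = Ξ`. -/
theorem sn_iff_cptp_comp {n m : ℕ} [NeZero n] [NeZero m]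
    (Ψ : Mat n →ₗ[ℂ] Mat m) (hHP : IsHP Ψ) (hTP : IsTP Ψ) :
    IsSN Ψ ↔
      ∃ (Φ : Mat n →ₗ[ℂ] Mat n) (Ξ : Mat n →ₗ[ℂ] Mat m),
        IsCPTP Φ ∧ IsCPTP Ξ ∧ Ψ.comp Φ = Ξ := by
  constructor
  · rintro ⟨ρ, ⟨hρ1, hρ2⟩, hΨ1, hΨ2⟩
    set Φ : Mat n →ₗ[ℂ] Mat n := (Matrix.traceLinearMap (Fin n) ℂ ℂ).smulRight ρ with hΦ
    have hΦapp : ∀ X : Mat n, Φ X = X.trace • ρ := fun X => rfl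
    refine ⟨Φ, Ψ.comp Φ, ⟨?_, ?_⟩, ⟨?_, ?_⟩, rfl⟩
    · obtain ⟨r, A, hA⟩ := traceSmul_kraus (n := n) hρ1
      exact ⟨r, A, fun X => (hΦapp X).trans (hA X)⟩
    · intro X; rw [hΦapp, trace_smul, hρ2, smul_eq_mul, mul_one]
    · obtain ⟨r, A, hA⟩ := traceSmul_kraus (n := n) hΨ1
      refine ⟨r, A, fun X => ?_⟩
      have : (Ψ.comp Φ) X = X.trace • Ψ ρ := by
        simp [LinearMap.comp_apply, hΦapp, _root_.map_smul]
      rw [this, hA X]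
    · intro X
      have : (Ψ.comp Φ) X = X.trace • Ψ ρ := by
        simp [LinearMap.comp_apply, hΦapp, _root_.map_smul]
      rw [this, trace_smul, hΨ2, smul_eq_mul, mul_one]
  · rintro ⟨Φ, Ξ, hΦ, hΞ, hcomp⟩
    refine ⟨Φ ((n:ℂ)⁻¹ • 1), cptp_density hΦ density_uniform, ?_⟩
    have : Ψ (Φ ((n:ℂ)⁻¹ • 1)) = Ξ ((n:ℂ)⁻¹ • 1) := by
      rw [← hcomp]; rfl
    rw [this]
    exact cptp_density hΞ density_uniform
end

section
/- Let Ψ be an HP linear map from B(H) to B(K). If there exists a positive semidefinite matrix ρ ∈ B(H) with Ψ(ρ) positive definite, then Ψ is semi-positive, i.e., there exists a positive definite density matrix σ with Ψ(σ) a positive definite density matrix (after normalizing, assuming Ψ is also trace-preserving). -/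
open Matrix
open scoped ComplexOrder

lemma aux_smul_posSemidef {k : ℕ} {c : ℝ} (hc : 0 ≤ c) {A : Mat k}
    (hA : A.PosSemidef) : ((c : ℂ) • A).PosSemidef := by
  rw [posSemidef_iff_dotProduct_mulVec]
  constructor
  · unfold Matrix.IsHermitian
    rw [conjTranspose_smul, hA.1.eq]
    congr 1
    simp [Complex.ext_iff]
  · intro x
    rw [smul_mulVec, dotProduct_smul, smul_eq_mul]
    exact mul_nonneg (by simpa [Complex.zero_le_real] using hc) (hA.dotProduct_mulVec_nonneg x)

lemma aux_smul_posDef {k : ℕ} {c : ℝ} (hc : 0 < c) {A : Mat k}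
    (hA : A.PosDef) : ((c : ℂ) • A).PosDef := by
  rw [posDef_iff_dotProduct_mulVec]
  constructor
  · unfold Matrix.IsHermitian
    rw [conjTranspose_smul, hA.1.eq]
    congr 1
    simp [Complex.ext_iff]
  · intro x hx
    rw [smul_mulVec, dotProduct_smul, smul_eq_mul]
    exact mul_pos (by simpa [Complex.zero_lt_real] using hc) (hA.dotProduct_mulVec_pos hx)

/-- Shift lemma: if all eigenvalues of a Hermitian `C` satisfy `0 ≤ t + λᵢ`, then
`t • 1 + C` is positive semidefinite. -/
lemma aux_shift_posSemidef {k : ℕ} [DecidableEq (Fin k)] {C : Mat k} (hC : C.IsHermitian)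
    (t : ℝ) (ht : ∀ i, 0 ≤ t + hC.eigenvalues i) :
    ((t : ℂ) • (1 : Mat k) + C).PosSemidef := by
  have hUstar : (hC.eigenvectorUnitary : Mat k) * star (hC.eigenvectorUnitary : Mat k) = 1 :=
    (Matrix.mem_unitaryGroup_iff).mp hC.eigenvectorUnitary.2
  have hdiageq : (t : ℂ) • (1 : Mat k) + Matrix.diagonal (RCLike.ofReal ∘ hC.eigenvalues)
      = Matrix.diagonal (fun i => ((t + hC.eigenvalues i : ℝ) : ℂ)) := by
    ext i j
    rcases eq_or_ne i j with rfl | hij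
    · simp only [Matrix.add_apply, Matrix.smul_apply, Matrix.one_apply_eq,
        Matrix.diagonal_apply_eq, Function.comp_apply, smul_eq_mul, mul_one]
      push_cast
      rfl
    · simp [Matrix.one_apply_ne hij, Matrix.diagonal_apply_ne _ hij]
  have key : (t : ℂ) • (1 : Mat k) + C
      = (hC.eigenvectorUnitary : Mat k)
          * Matrix.diagonal (fun i => ((t + hC.eigenvalues i : ℝ) : ℂ))
          * ((hC.eigenvectorUnitary : Mat k))ᴴ := by
    conv_lhs => rw [hC.spectral_theorem]
    rw [← hdiageq, Matrix.mul_add, Matrix.add_mul, ← Matrix.star_eq_conjTranspose]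
    congr 1
    rw [Matrix.mul_smul, Matrix.smul_mul, Matrix.mul_one, hUstar]
  rw [key]
  refine Matrix.PosSemidef.mul_mul_conjTranspose_same ?_ _
  rw [Matrix.posSemidef_diagonal_iff]
  intro i
  exact Complex.zero_le_real.mpr (ht i)

/-- Perturbation lemma: a positive definite matrix plus a small multiple of a
Hermitian matrix is still positive definite. -/
lemma aux_perturb {k : ℕ} [NeZero k] {A B : Mat k} (hA : A.PosDef) (hB : B.IsHermitian) :
    ∃ ε : ℝ, 0 < ε ∧ (A + (ε : ℂ) • B).PosDef := by
  have hne : (Finset.univ : Finset (Fin k)).Nonempty := Finset.univ_nonempty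
  set c : ℝ := Finset.univ.inf' hne hA.1.eigenvalues with hc
  set t : ℝ := Finset.univ.sup' hne (fun i => |hB.eigenvalues i|) with htdef
  have hcpos : 0 < c := by
    rw [hc, Finset.lt_inf'_iff]
    intro i _
    exact hA.eigenvalues_pos i
  have htnn : 0 ≤ t := by
    obtain ⟨i⟩ := (inferInstance : Nonempty (Fin k))
    rw [htdef]
    exact le_trans (abs_nonneg (hB.eigenvalues i)) (Finset.le_sup' (fun j => |hB.eigenvalues j|) (Finset.mem_univ i))
  -- A - c • 1 is PSD
  have hApsd : (((-c : ℝ) : ℂ) • (1 : Mat k) + A).PosSemidef := by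
    refine aux_shift_posSemidef hA.1 (-c) fun i => ?_
    have : c ≤ hA.1.eigenvalues i := Finset.inf'_le _ (Finset.mem_univ i)
    linarith
  -- t • 1 + B is PSD
  have hBpsd : (((t : ℝ) : ℂ) • (1 : Mat k) + B).PosSemidef := by
    refine aux_shift_posSemidef hB t fun i => ?_
    have : |hB.eigenvalues i| ≤ t := by
      rw [htdef]; exact Finset.le_sup' (fun j => |hB.eigenvalues j|) (Finset.mem_univ i)
    have := abs_le.mp this
    linarith
  set ε : ℝ := c / (2 * (t + 1)) with hε
  have hεpos : 0 < ε := by positivity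
  have hεt : ε * t < c := by
    rw [hε, div_mul_eq_mul_div, div_lt_iff₀ (by positivity)]
    nlinarith
  refine ⟨ε, hεpos, ?_⟩
  have key : A + (ε : ℂ) • B
      = ((((-c : ℝ) : ℂ) • (1 : Mat k) + A) + (ε : ℂ) • (((t : ℝ) : ℂ) • (1 : Mat k) + B))
        + (((c - ε * t : ℝ) : ℂ) • (1 : Mat k)) := by
    push_cast
    module
  rw [key]
  refine Matrix.PosDef.posSemidef_add (Matrix.PosSemidef.add hApsd ?_)
    (aux_smul_posDef (by linarith) Matrix.PosDef.one)
  exact aux_smul_posSemidef hεpos.le hBpsd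

/-- The trace of a positive definite matrix is a positive real. -/
lemma aux_trace_posDef {k : ℕ} [NeZero k] {A : Mat k} (hA : A.PosDef) :
    ∃ r : ℝ, 0 < r ∧ A.trace = (r : ℂ) := by
  have hdiag : ∀ i, (0 : ℂ) < A i i := by
    intro i
    exact hA.diag_pos
  have htr : (0 : ℂ) < A.trace := by
    rw [Matrix.trace]
    exact Finset.sum_pos (fun i _ => hdiag i) Finset.univ_nonempty
  rw [Complex.lt_def] at htr
  exact ⟨A.trace.re, by simpa using htr.1, by
    apply Complex.ext <;> simp [htr.2.symm]⟩

/-- For an HPTP map `Ψ`, the existence of a positive semidefinite `ρ`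
with `Ψ ρ` positive definite already implies that `Ψ` is semi-positive. -/
theorem sp_of_psd_posdef {n m : ℕ} [NeZero n] [NeZero m]
    (Ψ : Mat n →ₗ[ℂ] Mat m) (hHP : IsHP Ψ) (hTP : IsTP Ψ)
    (h : ∃ ρ : Mat n, ρ.PosSemidef ∧ (Ψ ρ).PosDef) :
    IsSP Ψ := by
  obtain ⟨ρ, hρ, hΨρ⟩ := h
  have hB : (Ψ (1 : Mat n)).IsHermitian := hHP 1 Matrix.isHermitian_one
  obtain ⟨ε, hεpos, hpert⟩ := aux_perturb hΨρ hB
  set σ' : Mat n := ρ + (ε : ℂ) • (1 : Mat n) with hσ'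
  have hσ'pd : σ'.PosDef :=
    Matrix.PosDef.posSemidef_add hρ (aux_smul_posDef hεpos Matrix.PosDef.one)
  have hΨσ' : Ψ σ' = Ψ ρ + (ε : ℂ) • Ψ (1 : Mat n) := by
    rw [hσ', map_add, Ψ.map_smul]
  have hΨσ'pd : (Ψ σ').PosDef := by rw [hΨσ']; exact hpert
  obtain ⟨r, hrpos, hrtr⟩ := aux_trace_posDef hΨσ'pd
  have htrσ' : σ'.trace = (r : ℂ) := by rw [← hTP σ']; exact hrtr
  refine ⟨((r⁻¹ : ℝ) : ℂ) • σ', aux_smul_posDef (by positivity) hσ'pd, ?_, ?_, ?_⟩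
  · rw [Matrix.trace_smul, htrσ', smul_eq_mul]
    push_cast
    field_simp
  · rw [Ψ.map_smul]
    exact aux_smul_posDef (by positivity) hΨσ'pd
  · rw [Ψ.map_smul, Matrix.trace_smul, hrtr, smul_eq_mul]
    push_cast
    field_simp
end

section
/- The set of SPTP maps from B(H) to B(K) is unbounded when dim H > 1 and dim K > 1: for any M > 0 there exists a semi-positive trace-preserving HPTP map Ψ with ‖Ψ‖ > M. -/
open Matrix
open scoped ComplexOrder

attribute [local instance] Matrix.frobeniusNormedAddCommGroup Matrix.frobeniusNormedSpace

/-- Hermitian-preserving continuous linear map. -/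
noncomputable def IsHPc {n m : ℕ} (Ψ : Mat n →L[ℂ] Mat m) : Prop :=
  ∀ X : Mat n, X.IsHermitian → (Ψ X).IsHermitian

/-- Trace-preserving continuous linear map. -/
noncomputable def IsTPc {n m : ℕ} (Ψ : Mat n →L[ℂ] Mat m) : Prop :=
  ∀ X : Mat n, (Ψ X).trace = X.trace

/-- Semi-positive: some positive definite density matrix is sent to a
positive definite density matrix. -/
noncomputable def IsSPc {n m : ℕ} (Ψ : Mat n →L[ℂ] Mat m) : Prop :=
  ∃ ρ : Mat n, ρ.PosDef ∧ ρ.trace = 1 ∧ (Ψ ρ).PosDef ∧ (Ψ ρ).trace = 1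

/-- Semi-nonnegative: some density matrix is sent to a density matrix. -/
noncomputable def IsSNc {n m : ℕ} (Ψ : Mat n →L[ℂ] Mat m) : Prop :=
  ∃ ρ : Mat n, (ρ.PosSemidef ∧ ρ.trace = 1) ∧ ((Ψ ρ).PosSemidef ∧ (Ψ ρ).trace = 1)

lemma entry_le_frobenius {p q : ℕ} (A : Matrix (Fin p) (Fin q) ℂ) (i : Fin p) (j : Fin q) :
    ‖A i j‖ ≤ ‖A‖ := by
  rw [Matrix.frobenius_norm_def]
  have h1 : ‖A i j‖ = (‖A i j‖ ^ (2:ℝ)) ^ (1/2 : ℝ) := by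
    rw [← Real.rpow_mul (norm_nonneg _)]
    norm_num
  rw [h1]
  apply Real.rpow_le_rpow (by positivity) _ (by norm_num)
  calc ‖A i j‖ ^ (2:ℝ) ≤ ∑ j', ‖A i j'‖ ^ (2:ℝ) :=
        Finset.single_le_sum (f := fun j' => ‖A i j'‖ ^ (2:ℝ))
          (fun _ _ => by positivity) (Finset.mem_univ j)
    _ ≤ ∑ i', ∑ j', ‖A i' j'‖ ^ (2:ℝ) :=
        Finset.single_le_sum (f := fun i' => ∑ j', ‖A i' j'‖ ^ (2:ℝ))
          (fun _ _ => by positivity) (Finset.mem_univ i)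

noncomputable def Dmat (m : ℕ) (hm : 1 < m) : Mat m :=
  Matrix.single (⟨0, by omega⟩ : Fin m) (⟨0, by omega⟩ : Fin m) 1
    - Matrix.single (⟨1, hm⟩ : Fin m) (⟨1, hm⟩ : Fin m) 1

lemma Dmat_herm {m : ℕ} (hm : 1 < m) : (Dmat m hm).IsHermitian := by
  show _ᴴ = _
  ext i j
  simp only [Dmat, Matrix.conjTranspose_apply, Matrix.sub_apply, Matrix.single, of_apply,
    star_sub, apply_ite (star : ℂ → ℂ), star_one, star_zero]
  exact congrArg₂ (· - ·)
    (if_congr ⟨fun h => ⟨h.2, h.1⟩, fun h => ⟨h.2, h.1⟩⟩ rfl rfl)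
    (if_congr ⟨fun h => ⟨h.2, h.1⟩, fun h => ⟨h.2, h.1⟩⟩ rfl rfl)

lemma Dmat_trace {m : ℕ} (hm : 1 < m) : (Dmat m hm).trace = 0 := by
  simp [Dmat, Matrix.trace_sub, Matrix.trace_single_eq_same]

lemma Dmat_00 {m : ℕ} (hm : 1 < m) :
    Dmat m hm ⟨0, by omega⟩ ⟨0, by omega⟩ = 1 := by
  simp [Dmat, Matrix.single, of_apply]

noncomputable def PsiLin {n m : ℕ} (hn : 1 < n) (hm : 1 < m) (k : ℝ) :
    Mat n →ₗ[ℂ] Mat m where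
  toFun X := (X.trace * (1/(m:ℂ))) • (1 : Mat m)
      + ((k:ℂ) * (X ⟨0, by omega⟩ ⟨0, by omega⟩ - X ⟨1, hn⟩ ⟨1, hn⟩)) • Dmat m hm
  map_add' X Y := by
    ext i j
    simp only [Matrix.trace_add, Matrix.add_apply, Matrix.smul_apply, smul_eq_mul]
    ring
  map_smul' c X := by
    ext i j
    simp only [Matrix.trace_smul, Matrix.smul_apply, Matrix.add_apply, smul_eq_mul,
      RingHom.id_apply]
    ring

lemma PsiLin_apply {n m : ℕ} (hn : 1 < n) (hm : 1 < m) (k : ℝ) (X : Mat n) :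
    PsiLin hn hm k X = (X.trace * (1/(m:ℂ))) • (1 : Mat m)
      + ((k:ℂ) * (X ⟨0, by omega⟩ ⟨0, by omega⟩ - X ⟨1, hn⟩ ⟨1, hn⟩)) • Dmat m hm := rfl

/-- The set of SPTP maps is unbounded when both dimensions exceed 1. -/
theorem sptp_unbounded {n m : ℕ} (hn : 1 < n) (hm : 1 < m) :
    ∀ M : ℝ, 0 < M → ∃ Ψ : Mat n →L[ℂ] Mat m,
      IsHPc Ψ ∧ IsTPc Ψ ∧ IsSPc Ψ ∧ M < @Norm.norm _ ContinuousLinearMap.hasOpNorm Ψ := by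
  intro M hM
  have hm0 : (m : ℂ) ≠ 0 := Nat.cast_ne_zero.mpr (by omega)
  have hn0 : (n : ℂ) ≠ 0 := Nat.cast_ne_zero.mpr (by omega)
  refine ⟨LinearMap.toContinuousLinearMap (PsiLin hn hm (M + 1)), ?_, ?_, ?_, ?_⟩
  · -- HP
    intro X hX
    have htr : star X.trace = X.trace := by
      conv_lhs => rw [← Matrix.trace_conjTranspose, hX.eq]
    have h00 : star (X ⟨0, by omega⟩ ⟨0, by omega⟩) = X ⟨0, by omega⟩ ⟨0, by omega⟩ := by
      conv_lhs => rw [← Matrix.conjTranspose_apply, hX.eq]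
    have h11 : star (X ⟨1, hn⟩ ⟨1, hn⟩) = X ⟨1, hn⟩ ⟨1, hn⟩ := by
      conv_lhs => rw [← Matrix.conjTranspose_apply, hX.eq]
    show _ᴴ = _
    simp only [LinearMap.coe_toContinuousLinearMap', PsiLin_apply, Matrix.conjTranspose_add,
      Matrix.conjTranspose_smul, Matrix.conjTranspose_one, (Dmat_herm hm).eq,
      star_mul', star_sub, htr, h00, h11, Complex.star_def, Complex.conj_ofReal,
      star_div₀, star_one, Complex.conj_natCast]
  · -- TP
    intro X
    simp only [LinearMap.coe_toContinuousLinearMap', PsiLin_apply, Matrix.trace_add,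
      Matrix.trace_smul, Matrix.trace_one, Dmat_trace hm, smul_eq_mul, mul_zero, add_zero]
    rw [Fintype.card_fin]
    field_simp
  · -- SP
    refine ⟨Matrix.diagonal (fun _ => (1/(n:ℂ))), ?_, ?_, ?_, ?_⟩
    · apply Matrix.PosDef.diagonal
      intro i
      rw [show (1/(n:ℂ)) = ((1/(n:ℝ) : ℝ) : ℂ) by push_cast; ring]
      rw [Complex.zero_lt_real]
      have : (0:ℝ) < n := by exact_mod_cast Nat.zero_lt_of_lt hn
      positivity
    · simp [Matrix.trace_diagonal, Finset.sum_const, hn0]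
    · have heval : LinearMap.toContinuousLinearMap (PsiLin hn hm (M + 1))
          (Matrix.diagonal (fun _ => (1/(n:ℂ)))) = Matrix.diagonal (fun _ => (1/(m:ℂ))) := by
        simp only [LinearMap.coe_toContinuousLinearMap', PsiLin_apply,
          Matrix.diagonal_apply_eq, sub_self, mul_zero, zero_smul, add_zero,
          Matrix.trace_diagonal, Finset.sum_const, Finset.card_univ, Fintype.card_fin,
          nsmul_eq_mul]
        rw [Matrix.smul_one_eq_diagonal]
        funext i
        field_simp
      rw [heval]
      apply Matrix.PosDef.diagonal
      intro i
      rw [show (1/(m:ℂ)) = ((1/(m:ℝ) : ℝ) : ℂ) by push_cast; ring]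
      rw [Complex.zero_lt_real]
      have : (0:ℝ) < m := by exact_mod_cast Nat.zero_lt_of_lt hm
      positivity
    · have heval : LinearMap.toContinuousLinearMap (PsiLin hn hm (M + 1))
          (Matrix.diagonal (fun _ => (1/(n:ℂ)))) = Matrix.diagonal (fun _ => (1/(m:ℂ))) := by
        simp only [LinearMap.coe_toContinuousLinearMap', PsiLin_apply,
          Matrix.diagonal_apply_eq, sub_self, mul_zero, zero_smul, add_zero,
          Matrix.trace_diagonal, Finset.sum_const, Finset.card_univ, Fintype.card_fin,
          nsmul_eq_mul]
        rw [Matrix.smul_one_eq_diagonal]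
        funext i
        field_simp
      rw [heval]
      simp [Matrix.trace_diagonal, hm0]
  · -- norm
    set Ψ := LinearMap.toContinuousLinearMap (PsiLin hn hm (M + 1)) with hΨ
    set E : Mat n := Matrix.single (⟨0, by omega⟩ : Fin n) (⟨0, by omega⟩ : Fin n) 1 with hE
    have hEnorm : ‖E‖ = 1 := by
      rw [Matrix.frobenius_norm_def]
      have hsum : ∑ i, ∑ j, ‖E i j‖ ^ (2:ℝ)
          = ∑ i, ∑ j, (if (⟨0, by omega⟩ : Fin n) = i ∧ (⟨0, by omega⟩ : Fin n) = j
              then (1:ℝ) else 0) := by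
        refine Finset.sum_congr rfl fun i _ => Finset.sum_congr rfl fun j _ => ?_
        simp only [hE, Matrix.single, of_apply]
        split_ifs <;> simp [Real.zero_rpow]
      rw [hsum]
      simp [Finset.sum_ite_eq, ite_and]
    have hEntry : (Ψ E) ⟨0, by omega⟩ ⟨0, by omega⟩ = (1/(m:ℂ)) + ((M:ℂ) + 1) := by
      have hE00 : E ⟨0, by omega⟩ ⟨0, by omega⟩ = 1 := by
        simp [hE, Matrix.single, of_apply]
      have hE11 : E ⟨1, hn⟩ ⟨1, hn⟩ = 0 := by
        simp only [hE, Matrix.single, of_apply]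
        rw [if_neg]
        rintro ⟨h, -⟩
        exact absurd (congrArg Fin.val h) (by simp)
      have hEtr : E.trace = 1 := by
        simp [hE, Matrix.trace_single_eq_same]
      simp only [hΨ, LinearMap.coe_toContinuousLinearMap', PsiLin_apply, hE00, hE11, hEtr,
        Matrix.add_apply, Matrix.smul_apply, Matrix.one_apply_eq, Dmat_00 hm, smul_eq_mul,
        sub_zero, mul_one]
      push_cast
      ring
    have h1 : M < ‖(Ψ E) ⟨0, by omega⟩ ⟨0, by omega⟩‖ := by
      rw [hEntry, show (1/(m:ℂ)) + ((M:ℂ) + 1) = ((1/(m:ℝ) + (M + 1) : ℝ) : ℂ) by push_cast; ring,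
        Complex.norm_real, Real.norm_eq_abs]
      have hmpos : (0:ℝ) < 1/(m:ℝ) := by
        have : (0:ℝ) < m := by exact_mod_cast Nat.zero_lt_of_lt hm
        positivity
      rw [abs_of_pos (by linarith)]
      linarith
    calc M < ‖(Ψ E) ⟨0, by omega⟩ ⟨0, by omega⟩‖ := h1
      _ ≤ ‖Ψ E‖ := entry_le_frobenius _ _ _
      _ ≤ @Norm.norm _ ContinuousLinearMap.hasOpNorm Ψ * ‖E‖ := Ψ.le_opNorm E
      _ = @Norm.norm _ ContinuousLinearMap.hasOpNorm Ψ := by rw [hEnorm, mul_one]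
end

section
/- The interior of the set of SNTP maps (within the space of HPTP maps from B(H) to B(K)) is exactly the set of SPTP maps. -/
open Matrix
open scoped ComplexOrder
attribute [local instance] Matrix.frobeniusNormedAddCommGroup Matrix.frobeniusNormedSpace
lemma norm_sq_frobenius {m : ℕ} (C : Mat m) : ‖C‖ ^ 2 = ∑ i, ∑ j, ‖C i j‖ ^ 2 := by
  rw [Matrix.frobenius_norm_def]
  rw [← Real.rpow_natCast _ 2, ← Real.rpow_mul (by positivity)]
  norm_num

lemma quad_upper {m : ℕ} (C : Mat m) (x : Fin m → ℂ) :
    ‖star x ⬝ᵥ C *ᵥ x‖ ≤ ‖C‖ * ∑ i, ‖x i‖ ^ 2 := by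
  have h1 : ‖star x ⬝ᵥ C *ᵥ x‖ ≤ ∑ i, ∑ j, ‖x i‖ * ‖x j‖ * ‖C i j‖ := by
    calc ‖star x ⬝ᵥ C *ᵥ x‖ = ‖∑ i, ∑ j, star (x i) * (C i j * x j)‖ := by
          simp [dotProduct, mulVec, Finset.mul_sum]
      _ ≤ ∑ i, ∑ j, ‖star (x i) * (C i j * x j)‖ := by
          refine (norm_sum_le _ _).trans (Finset.sum_le_sum fun i _ => norm_sum_le _ _)
      _ = ∑ i, ∑ j, ‖x i‖ * ‖x j‖ * ‖C i j‖ := by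
          simp only [norm_mul, norm_star]
          exact Finset.sum_congr rfl fun i _ => Finset.sum_congr rfl fun j _ => by ring
  refine h1.trans ?_
  have h2 := Finset.sum_mul_sq_le_sq_mul_sq Finset.univ
    (fun p : Fin m × Fin m => ‖x p.1‖ * ‖x p.2‖) (fun p : Fin m × Fin m => ‖C p.1 p.2‖)
  have e1 : ∑ i, ∑ j, ‖x i‖ * ‖x j‖ * ‖C i j‖
      = ∑ p : Fin m × Fin m, (‖x p.1‖ * ‖x p.2‖) * ‖C p.1 p.2‖ :=
    (Fintype.sum_prod_type (fun p : Fin m × Fin m => (‖x p.1‖ * ‖x p.2‖) * ‖C p.1 p.2‖)).symm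
  have e2 : ∑ p : Fin m × Fin m, (‖x p.1‖ * ‖x p.2‖) ^ 2 = (∑ i, ‖x i‖ ^ 2) ^ 2 := by
    rw [Fintype.sum_prod_type, sq (∑ i, ‖x i‖ ^ 2), Finset.sum_mul_sum]
    simp [mul_pow]
  have e3 : ∑ p : Fin m × Fin m, ‖C p.1 p.2‖ ^ 2 = ‖C‖ ^ 2 := by
    rw [norm_sq_frobenius, Fintype.sum_prod_type]
  rw [e1]
  have hnn : (0:ℝ) ≤ ∑ p : Fin m × Fin m, (‖x p.1‖ * ‖x p.2‖) * ‖C p.1 p.2‖ :=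
    Finset.sum_nonneg fun p _ => by positivity
  have hb : (0:ℝ) ≤ ‖C‖ * ∑ i, ‖x i‖ ^ 2 := by positivity
  refine (pow_le_pow_iff_left₀ hnn hb two_ne_zero).mp ?_
  calc (∑ p : Fin m × Fin m, (‖x p.1‖ * ‖x p.2‖) * ‖C p.1 p.2‖) ^ 2
      ≤ (∑ p : Fin m × Fin m, (‖x p.1‖ * ‖x p.2‖) ^ 2) * ∑ p : Fin m × Fin m, ‖C p.1 p.2‖ ^ 2 := h2
    _ = (‖C‖ * ∑ i, ‖x i‖ ^ 2) ^ 2 := by rw [e2, e3]; ring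

lemma quad_lower {m : ℕ} (hm : 0 < m) {A : Mat m} (hA : A.PosDef) :
    ∃ c > 0, ∀ x : Fin m → ℂ, c * ∑ i, ‖x i‖ ^ 2 ≤ (star x ⬝ᵥ A *ᵥ x).re := by
  haveI : Nonempty (Fin m) := ⟨⟨0, hm⟩⟩
  set E := EuclideanSpace ℂ (Fin m)
  have hcont : Continuous fun y : E => (star (y : Fin m → ℂ) ⬝ᵥ A *ᵥ (y : Fin m → ℂ)).re := by
    have h1 : Continuous fun y : E => (y : Fin m → ℂ) :=
      (PiLp.continuous_ofLp 2 (fun _ : Fin m => ℂ))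
    simp only [dotProduct, mulVec]
    refine Continuous.comp Complex.continuous_re ?_
    refine continuous_finset_sum _ (fun i _ => ?_)
    refine Continuous.mul ?_ (continuous_finset_sum _ (fun j _ => ?_))
    · exact ((continuous_apply i).comp h1).star
    · exact continuous_const.mul ((continuous_apply j).comp h1)
  obtain ⟨x₀, hx₀S, hmin⟩ := (isCompact_sphere (0:E) 1).exists_isMinOn
    (NormedSpace.sphere_nonempty.mpr zero_le_one)
    (hcont.continuousOn)
  have hx₀norm : ‖x₀‖ = 1 := by simpa using mem_sphere_zero_iff_norm.mp hx₀S
  have hx₀ne : (x₀ : Fin m → ℂ) ≠ 0 := by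
    intro h
    have : x₀ = 0 := WithLp.ofLp_injective 2 h
    simp [this] at hx₀norm
  set c := (star (x₀ : Fin m → ℂ) ⬝ᵥ A *ᵥ (x₀ : Fin m → ℂ)).re with hc
  have hcpos : 0 < c := by
    have := hA.re_dotProduct_pos hx₀ne
    simpa [RCLike.re_to_complex] using this
  refine ⟨c, hcpos, fun x => ?_⟩
  by_cases hx : x = 0
  · simp [hx]
  · have hpos : (0:ℝ) < ∑ i, ‖x i‖ ^ 2 := by
      obtain ⟨i, hi⟩ := Function.ne_iff.mp hx
      exact Finset.sum_pos' (fun j _ => by positivity)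
        ⟨i, Finset.mem_univ i, pow_pos (norm_pos_iff.mpr hi) 2⟩
    set r : ℝ := Real.sqrt (∑ i, ‖x i‖ ^ 2) with hr
    have hrpos : 0 < r := Real.sqrt_pos.mpr hpos
    have hr2 : r ^ 2 = ∑ i, ‖x i‖ ^ 2 := Real.sq_sqrt hpos.le
    set y : E := (WithLp.equiv 2 (Fin m → ℂ)).symm x with hy
    have hynorm : ‖y‖ = r := by
      rw [EuclideanSpace.norm_eq]
      rfl
    set u : E := r⁻¹ • y with hu
    have hunorm : ‖u‖ = 1 := by
      rw [hu, norm_smul, hynorm, norm_inv, Real.norm_of_nonneg hrpos.le,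
        inv_mul_cancel₀ hrpos.ne']
    have humem : u ∈ Metric.sphere (0:E) 1 := by
      simpa using mem_sphere_zero_iff_norm.mpr hunorm
    have hle : c ≤ (star (u : Fin m → ℂ) ⬝ᵥ A *ᵥ (u : Fin m → ℂ)).re := hmin humem
    have hufun : (u : Fin m → ℂ) = ((r:ℂ))⁻¹ • x := by
      funext i
      show r⁻¹ • x i = (↑r)⁻¹ * x i
      rw [Complex.real_smul, Complex.ofReal_inv]
    have key : (star (u : Fin m → ℂ) ⬝ᵥ A *ᵥ (u : Fin m → ℂ)).re
        = r⁻¹ * (r⁻¹ * (star x ⬝ᵥ A *ᵥ x).re) := by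
      rw [hufun]
      rw [star_smul, smul_dotProduct, mulVec_smul, dotProduct_smul]
      simp [smul_eq_mul]
    rw [key] at hle
    have := mul_le_mul_of_nonneg_left hle (le_of_lt (mul_pos hrpos hrpos))
    calc c * ∑ i, ‖x i‖ ^ 2 = (r * r) * c := by rw [← hr2]; ring
      _ ≤ (r * r) * (r⁻¹ * (r⁻¹ * (star x ⬝ᵥ A *ᵥ x).re)) := this
      _ = (star x ⬝ᵥ A *ᵥ x).re := by field_simp

lemma herm_quad_real {m : ℕ} {B : Mat m} (hB : B.IsHermitian) (x : Fin m → ℂ) :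
    (star x ⬝ᵥ B *ᵥ x).im = 0 := by
  rw [← Complex.conj_eq_iff_im]
  have h1 : star x ⬝ᵥ B *ᵥ x = star (star (B *ᵥ x) ⬝ᵥ x) := star_dotProduct x (B *ᵥ x)
  have h2 : star (B *ᵥ x) ⬝ᵥ x = star x ⬝ᵥ B *ᵥ x := by
    rw [star_mulVec, ← dotProduct_mulVec, hB.eq]
  calc (starRingEnd ℂ) (star x ⬝ᵥ B *ᵥ x) = star (star x ⬝ᵥ B *ᵥ x) := rfl
    _ = star (star (star (B *ᵥ x) ⬝ᵥ x)) := by rw [← h1]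
    _ = star (B *ᵥ x) ⬝ᵥ x := star_star _
    _ = star x ⬝ᵥ B *ᵥ x := h2

lemma posDef_of_close {m : ℕ} (hm : 0 < m) {A : Mat m} (hA : A.PosDef) :
    ∃ ε > 0, ∀ B : Mat m, B.IsHermitian → ‖B - A‖ < ε → B.PosDef := by
  obtain ⟨c, hc, hlow⟩ := quad_lower hm hA
  refine ⟨c, hc, fun B hB hBA => Matrix.PosDef.of_dotProduct_mulVec_pos hB fun x hx => ?_⟩
  have hsum : (0:ℝ) < ∑ i, ‖x i‖ ^ 2 := by
    obtain ⟨i, hi⟩ := Function.ne_iff.mp hx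
    exact Finset.sum_pos' (fun j _ => by positivity)
      ⟨i, Finset.mem_univ i, pow_pos (norm_pos_iff.mpr hi) 2⟩
  have hsplit : star x ⬝ᵥ B *ᵥ x = star x ⬝ᵥ A *ᵥ x + star x ⬝ᵥ (B - A) *ᵥ x := by
    rw [← dotProduct_add, ← add_mulVec, add_sub_cancel]
  have hre : 0 < (star x ⬝ᵥ B *ᵥ x).re := by
    rw [hsplit, Complex.add_re]
    have h1 := hlow x
    have h2 : |(star x ⬝ᵥ (B - A) *ᵥ x).re| ≤ ‖B - A‖ * ∑ i, ‖x i‖ ^ 2 :=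
      (Complex.abs_re_le_norm _).trans (quad_upper (B - A) x)
    have h3 : ‖B - A‖ * ∑ i, ‖x i‖ ^ 2 < c * ∑ i, ‖x i‖ ^ 2 :=
      mul_lt_mul_of_pos_right hBA hsum
    have := abs_le.mp h2
    nlinarith [this.1]
  rw [Complex.lt_def]
  exact ⟨by simpa using hre, by simpa using (herm_quad_real hB x).symm⟩

lemma posDef_smul_real {m : ℕ} {t : ℝ} (ht : 0 < t) {M : Mat m} (h : M.PosDef) :
    (t • M).PosDef := by
  constructor
  · unfold Matrix.IsHermitian
    simp [Matrix.conjTranspose_smul, h.1.eq]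
  · intro x hx
    exact (h.smul ht).2 hx

lemma posSemidef_smul_real {m : ℕ} {t : ℝ} (ht : 0 ≤ t) {M : Mat m} (h : M.PosSemidef) :
    (t • M).PosSemidef := by
  constructor
  · unfold Matrix.IsHermitian
    simp [Matrix.conjTranspose_smul, h.1.eq]
  · intro x
    exact (h.smul ht).2 x

lemma isHermitian_smul_real {m : ℕ} (t : ℝ) {M : Mat m} (h : M.IsHermitian) :
    (t • M).IsHermitian := by
  unfold Matrix.IsHermitian
  simp [Matrix.conjTranspose_smul, h.eq]

lemma unit_matrix_posdef {m : ℕ} : ((m:ℝ)⁻¹ • (1 : Mat m)).PosDef ∨ True := Or.inr trivial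

/-- the normalized identity density matrix -/
noncomputable def idDen (m : ℕ) : Mat m := (m:ℝ)⁻¹ • (1 : Mat m)

lemma idDen_posDef {m : ℕ} (hm : 0 < m) : (idDen m).PosDef :=
  posDef_smul_real (by positivity) Matrix.PosDef.one

lemma idDen_trace {m : ℕ} (hm : 0 < m) : (idDen m).trace = 1 := by
  rw [idDen, Matrix.trace_smul, Matrix.trace_one]
  have : ((m:ℝ)⁻¹ : ℝ) • ((Fintype.card (Fin m) : ℂ)) = ((m:ℝ)⁻¹ * m : ℝ) := by
    rw [Complex.real_smul]
    push_cast
    simp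
  rw [this, inv_mul_cancel₀ (by positivity : (m:ℝ) ≠ 0)]
  norm_num

/-- The HPTP map `X ↦ (trace X) • idDen m`. -/
noncomputable def trMap (n m : ℕ) : Mat n →L[ℂ] Mat m :=
  LinearMap.toContinuousLinearMap
    ((Matrix.traceLinearMap (Fin n) ℂ ℂ).smulRight (idDen m))

lemma trMap_apply {n m : ℕ} (X : Mat n) : trMap n m X = X.trace • idDen m := rfl

set_option maxHeartbeats 2000000 in
/-- Within the space of HPTP maps, the interior of the set of SNTP maps
is exactly the set of SPTP maps. -/
theorem interior_sntp_eq_sptp {n m : ℕ} (hn : 1 < n) (hm : 1 < m) :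
    interior {Ψ : {f : Mat n →L[ℂ] Mat m // IsHPc f ∧ IsTPc f} | IsSNc Ψ.val}
      = {Ψ : {f : Mat n →L[ℂ] Mat m // IsHPc f ∧ IsTPc f} | IsSPc Ψ.val} := by
  have hn0 : 0 < n := by omega
  have hm0 : 0 < m := by omega
  ext Ψ
  simp only [Set.mem_setOf_eq]
  constructor
  · intro hΨ
    -- direction interior ⊆ SP
    set D : Mat n →L[ℂ] Mat m := Ψ.val - trMap n m with hD
    have hHP : ∀ t : ℝ, IsHPc (Ψ.val + t • D) := by
      intro t X hX
      have h1 : (Ψ.val X).IsHermitian := Ψ.2.1 X hX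
      have h2 : (trMap n m X).IsHermitian := by
        rw [trMap_apply]
        have htr : star X.trace = X.trace := by
          rw [← Matrix.trace_conjTranspose, hX.eq]
        unfold Matrix.IsHermitian
        rw [Matrix.conjTranspose_smul, htr, (idDen_posDef hm0).1.eq]
      have : (Ψ.val + t • D) X = Ψ.val X + t • (Ψ.val X - trMap n m X) := by
        simp [hD]
      rw [this]
      exact h1.add (isHermitian_smul_real t (h1.sub h2))
    have hTP : ∀ t : ℝ, IsTPc (Ψ.val + t • D) := by
      intro t X
      have h1 : (Ψ.val X).trace = X.trace := Ψ.2.2 X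
      have h2 : (trMap n m X).trace = X.trace := by
        rw [trMap_apply, Matrix.trace_smul, idDen_trace hm0, smul_eq_mul, mul_one]
      have : (Ψ.val + t • D) X = Ψ.val X + t • (Ψ.val X - trMap n m X) := by
        simp [hD]
      rw [this, Matrix.trace_add, Matrix.trace_smul, Matrix.trace_sub, h1, h2, sub_self,
        smul_zero, add_zero]
    set F : ℝ → {f : Mat n →L[ℂ] Mat m // IsHPc f ∧ IsTPc f} :=
      fun t => ⟨Ψ.val + t • D, hHP t, hTP t⟩ with hF
    have hFc : Continuous F := by
      refine Continuous.subtype_mk ?_ _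
      have hsm : Continuous fun t : ℝ => (t : ℂ) • D :=
        Complex.continuous_ofReal.smul continuous_const
      refine continuous_const.add ?_
      convert hsm using 2 with t
      exact (Complex.coe_smul t D).symm
    have hF0 : F 0 = Ψ := by
      apply Subtype.ext
      show Ψ.val + (0:ℝ) • D = Ψ.val
      rw [show ((0:ℝ) • D : Mat n →L[ℂ] Mat m) = 0 from zero_smul ℝ D, add_zero]
    have hnb : F ⁻¹' (interior {Ψ : {f : Mat n →L[ℂ] Mat m // IsHPc f ∧ IsTPc f} | IsSNc Ψ.val})
        ∈ nhds (0:ℝ) :=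
      (isOpen_interior.preimage hFc).mem_nhds (by rw [Set.mem_preimage, hF0]; exact hΨ)
    obtain ⟨δ, hδ, hball⟩ := Metric.mem_nhds_iff.mp hnb
    set t : ℝ := δ/2 with htdef
    have ht : 0 < t := by positivity
    have htmem : F t ∈ interior {Ψ : {f : Mat n →L[ℂ] Mat m // IsHPc f ∧ IsTPc f} | IsSNc Ψ.val} := by
      apply hball
      simp only [Metric.mem_ball, dist_zero_right, Real.norm_eq_abs, htdef]
      rw [abs_of_pos (by positivity)]
      linarith
    have hSN : F t ∈ {Ψ : {f : Mat n →L[ℂ] Mat m // IsHPc f ∧ IsTPc f} | IsSNc Ψ.val} :=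
      interior_subset htmem
    rw [Set.mem_setOf_eq] at hSN
    obtain ⟨ρ, ⟨hρpsd, hρtr⟩, hΦρpsd, hΦρtr⟩ := hSN
    -- recover Ψ ρ posdef
    have hEρ : trMap n m ρ = idDen m := by rw [trMap_apply, hρtr, one_smul]
    have hΦρ : (F t).val ρ = Ψ.val ρ + t • (Ψ.val ρ - idDen m) := by
      simp [hF, hD, hEρ]
    have h1t : (1:ℝ) + t ≠ 0 := by positivity
    have hrec : Ψ.val ρ = (1+t)⁻¹ • ((F t).val ρ + t • idDen m) := by
      rw [hΦρ]
      match_scalars <;> field_simp <;> ring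
    have hΨρpd : (Ψ.val ρ).PosDef := by
      rw [hrec]
      exact posDef_smul_real (by positivity)
        (Matrix.PosDef.posSemidef_add hΦρpsd (posDef_smul_real ht (idDen_posDef hm0)))
    have hΨρtr' : (Ψ.val ρ).trace = 1 := (Ψ.2.2 ρ).trans hρtr
    obtain ⟨ε, hε, hclose⟩ := posDef_of_close hm0 hΨρpd
    set M : Mat m := Ψ.val (idDen n) - Ψ.val ρ with hM
    set s : ℝ := min (1/2) (ε / (2*(‖M‖ + 1))) with hs
    have hspos : 0 < s := lt_min (by norm_num) (by positivity)
    have hs1 : s ≤ 1/2 := min_le_left _ _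
    have hsM : s * ‖M‖ < ε := by
      have h1 : s ≤ ε / (2*(‖M‖ + 1)) := min_le_right _ _
      have h2 : (0:ℝ) ≤ ‖M‖ := norm_nonneg _
      have h3 : (0:ℝ) < ‖M‖ + 1 := by linarith
      have h4 : s * ‖M‖ ≤ ε / (2*(‖M‖ + 1)) * ‖M‖ := mul_le_mul_of_nonneg_right h1 h2
      have h5 : ε / (2*(‖M‖ + 1)) * ‖M‖ < ε := by
        rw [div_mul_eq_mul_div, div_lt_iff₀ (by linarith)]
        nlinarith
      linarith
    set ρ' : Mat n := ρ + s • (idDen n - ρ) with hρ'def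
    have htrρ' : ρ'.trace = 1 := by
      simp [hρ'def, Matrix.trace_add, Matrix.trace_smul, Matrix.trace_sub,
        idDen_trace hn0, hρtr]
    have hρ'eq : ρ' = (1-s) • ρ + s • idDen n := by
      rw [hρ'def]; module
    have hρ'pd : ρ'.PosDef := by
      rw [hρ'eq]
      exact Matrix.PosDef.posSemidef_add (posSemidef_smul_real (by linarith) hρpsd)
        (posDef_smul_real hspos (idDen_posDef hn0))
    have hΨρ' : Ψ.val ρ' = Ψ.val ρ + s • M := by
      rw [hρ'def, map_add, ContinuousLinearMap.map_smul_of_tower, map_sub, hM]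
    have hρ'herm : ρ'.IsHermitian := hρ'pd.1
    have hΨρ'herm : (Ψ.val ρ').IsHermitian := Ψ.2.1 ρ' hρ'herm
    have hΨρ'pd : (Ψ.val ρ').PosDef := by
      refine hclose _ hΨρ'herm ?_
      rw [hΨρ']
      rw [add_sub_cancel_left, norm_smul, Real.norm_eq_abs, abs_of_pos hspos]
      exact hsM
    exact ⟨ρ', hρ'pd, htrρ', hΨρ'pd, (Ψ.2.2 ρ').trans htrρ'⟩
  · intro hΨ
    obtain ⟨ρ, hρ, hρtr, hΨρ, hΨρtr⟩ := hΨ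
    obtain ⟨ε, hε, hclose⟩ := posDef_of_close hm0 hΨρ
    rw [mem_interior]
    refine ⟨{Φ : {f : Mat n →L[ℂ] Mat m // IsHPc f ∧ IsTPc f} | ‖Φ.val ρ - Ψ.val ρ‖ < ε},
      ?_, ?_, ?_⟩
    · intro Φ hΦ
      simp only [Set.mem_setOf_eq] at hΦ ⊢
      have hherm : (Φ.val ρ).IsHermitian := Φ.2.1 ρ hρ.1
      have hpd : (Φ.val ρ).PosDef := hclose _ hherm hΦ
      exact ⟨ρ, ⟨hρ.posSemidef, hρtr⟩, hpd.posSemidef, (Φ.2.2 ρ).trans hρtr⟩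
    · have : Continuous fun Φ : {f : Mat n →L[ℂ] Mat m // IsHPc f ∧ IsTPc f} => Φ.val ρ := by
        exact (ContinuousLinearMap.apply ℂ (Mat m) ρ).continuous.comp continuous_subtype_val
      exact isOpen_lt ((this.sub continuous_const).norm) continuous_const
    · simp [hε]
end

section
/- The convex hull of the set of semi-positive trace-preserving maps from B(H) to B(K) equals the full set of HPTP maps: every HPTP map is a convex combination (in fact, the average) of two SPTP maps. -/
open Matrix
open scoped ComplexOrder

/-! ### Auxiliary construction -/

lemma aux_sum {n : ℕ} (hn : 1 < n) (a b c : ℝ) :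
    ∑ i : Fin n, (if (i : ℕ) = 0 then a else if (i : ℕ) = 1 then b else c)
      = a + b + ((n : ℝ) - 2) * c := by
  set i0 : Fin n := ⟨0, by omega⟩ with hi0
  set i1 : Fin n := ⟨1, by omega⟩ with hi1
  have hne : i0 ≠ i1 := by simp [hi0, hi1, Fin.ext_iff]
  have hpt : ∀ i : Fin n,
      (if (i : ℕ) = 0 then a else if (i : ℕ) = 1 then b else c)
        = c + ((if i = i0 then a - c else 0) + (if i = i1 then b - c else 0)) := by
    intro i
    have h0 : ((i : ℕ) = 0) ↔ i = i0 := by simp [hi0, Fin.ext_iff]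
    have h1 : ((i : ℕ) = 1) ↔ i = i1 := by simp [hi1, Fin.ext_iff]
    by_cases hA : i = i0 <;> by_cases hB : i = i1 <;> simp_all [h0, h1]
  rw [Finset.sum_congr rfl (fun i _ => hpt i), Finset.sum_add_distrib,
    Finset.sum_add_distrib, Finset.sum_const, Finset.sum_ite_eq' Finset.univ i0,
    Finset.sum_ite_eq' Finset.univ i1]
  simp [Finset.card_univ, nsmul_eq_mul]
  ring

/-- The diagonal "dual" matrix `A = diag(1-n, 1+n, 1, …, 1)`. -/
noncomputable def auxA (n : ℕ) : Mat n :=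
  Matrix.diagonal (fun i => ((if (i : ℕ) = 0 then 1 - n else if (i : ℕ) = 1 then 1 + n
    else 1 : ℝ) : ℂ))

/-- The positive definite density `H₂ = diag(3/(2n), 1/(2n), 1/n, …, 1/n)`. -/
noncomputable def auxH2 (n : ℕ) : Mat n :=
  Matrix.diagonal (fun i => ((if (i : ℕ) = 0 then 3 / (2 * n) else if (i : ℕ) = 1 then 1 / (2 * n)
    else 1 / n : ℝ) : ℂ))

lemma auxA_herm (n : ℕ) : (auxA n).IsHermitian := by
  apply Matrix.isHermitian_diagonal_of_self_adjoint
  funext i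
  exact Complex.conj_ofReal _

lemma auxH2_herm (n : ℕ) : (auxH2 n).IsHermitian := by
  apply Matrix.isHermitian_diagonal_of_self_adjoint
  funext i
  exact Complex.conj_ofReal _

lemma auxH2_posDef {n : ℕ} (hn : 1 < n) : (auxH2 n).PosDef := by
  apply Matrix.PosDef.diagonal
  intro i
  have hn0 : (0:ℝ) < n := by positivity
  rw [Complex.zero_lt_real]
  split_ifs <;> positivity

lemma auxH2_trace {n : ℕ} (hn : 1 < n) : (auxH2 n).trace = 1 := by
  have hn0 : (n:ℝ) ≠ 0 := by positivity
  rw [auxH2, Matrix.trace_diagonal, ← Complex.ofReal_sum, aux_sum hn]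
  rw [show (3 / (2*(n:ℝ)) + 1/(2*n) + ((n:ℝ)-2) * (1/n)) = 1 by field_simp; ring]
  simp

lemma auxA_mul_H2_trace {n : ℕ} (hn : 1 < n) : (auxA n * auxH2 n).trace = 0 := by
  have hn0 : (n:ℝ) ≠ 0 := by positivity
  rw [auxA, auxH2, Matrix.diagonal_mul_diagonal, Matrix.trace_diagonal]
  have hpt : ∀ i : Fin n,
      ((if (i : ℕ) = 0 then 1 - (n:ℝ) else if (i : ℕ) = 1 then 1 + n else 1 : ℝ) : ℂ)
        * ((if (i : ℕ) = 0 then 3 / (2 * (n:ℝ)) else if (i : ℕ) = 1 then 1 / (2 * n)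
            else 1 / n : ℝ) : ℂ)
      = ((if (i : ℕ) = 0 then (1 - (n:ℝ)) * (3 / (2 * n)) else if (i : ℕ) = 1
          then (1 + (n:ℝ)) * (1 / (2 * n)) else 1 / n : ℝ) : ℂ) := by
    intro i
    split_ifs <;> push_cast <;> ring
  rw [Finset.sum_congr rfl (fun i _ => hpt i), ← Complex.ofReal_sum, aux_sum hn]
  rw [show ((1 - (n:ℝ)) * (3 / (2 * n)) + (1 + (n:ℝ)) * (1 / (2 * n))
      + ((n:ℝ)-2) * (1/n)) = 0 by field_simp; ring]
  simp

lemma auxA_trace {n : ℕ} (hn : 1 < n) : (auxA n).trace = n := by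
  rw [auxA, Matrix.trace_diagonal, ← Complex.ofReal_sum, aux_sum hn]
  rw [show ((1 - (n:ℝ)) + (1+n) + ((n:ℝ)-2) * 1) = n by ring]
  simp

lemma herm_smul_real {m : ℕ} {c : ℂ} (hc : star c = c) {M : Mat m} (hM : M.IsHermitian) :
    (c • M).IsHermitian := by
  unfold Matrix.IsHermitian at *
  rw [Matrix.conjTranspose_smul, hc, hM]

/-- Every HPTP map is the average of two SPTP maps, so the convex hull
of the SPTP maps is the whole set of HPTP maps. -/
theorem hptp_eq_convex_hull_sptp {n m : ℕ} (hn : 1 < n) [NeZero m]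
    (Φ : Mat n →ₗ[ℂ] Mat m) (hHP : IsHP Φ) (hTP : IsTP Φ) :
    ∃ Ψ₁ Ψ₂ : Mat n →ₗ[ℂ] Mat m,
      IsHP Ψ₁ ∧ IsTP Ψ₁ ∧ IsSP Ψ₁ ∧
      IsHP Ψ₂ ∧ IsTP Ψ₂ ∧ IsSP Ψ₂ ∧
      Φ = ((1 / 2 : ℂ)) • (Ψ₁ + Ψ₂) := by
  have hm : (m : ℝ) ≠ 0 := Nat.cast_ne_zero.mpr (NeZero.ne m)
  have hn0 : (n : ℝ) ≠ 0 := by positivity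
  -- the fixed positive definite densities
  set σ : Mat m := Matrix.diagonal (fun _ => (((m:ℝ)⁻¹ : ℝ) : ℂ)) with hσ
  set H1 : Mat n := Matrix.diagonal (fun _ => (((n:ℝ)⁻¹ : ℝ) : ℂ)) with hH1
  have hσherm : σ.IsHermitian := by
    apply Matrix.isHermitian_diagonal_of_self_adjoint
    funext i
    exact Complex.conj_ofReal _
  have hH1herm : H1.IsHermitian := by
    apply Matrix.isHermitian_diagonal_of_self_adjoint
    funext i
    exact Complex.conj_ofReal _
  have hσpd : σ.PosDef := by
    apply Matrix.PosDef.diagonal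
    intro i
    rw [Complex.zero_lt_real]
    positivity
  have hσtr : σ.trace = 1 := by
    rw [hσ, Matrix.trace_diagonal, Finset.sum_const, Finset.card_univ, Fintype.card_fin,
      nsmul_eq_mul]
    push_cast
    field_simp
    exact div_self (by exact_mod_cast hm)
  have hH1pd : H1.PosDef := by
    apply Matrix.PosDef.diagonal
    intro i
    rw [Complex.zero_lt_real]
    positivity
  have hH1tr : H1.trace = 1 := by
    rw [hH1, Matrix.trace_diagonal, Finset.sum_const, Finset.card_univ, Fintype.card_fin,
      nsmul_eq_mul]
    push_cast
    field_simp
  set K : Mat m := (2 : ℂ) • (σ - Φ H1) with hK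
  have hKtr : K.trace = 0 := by
    rw [hK, Matrix.trace_smul, Matrix.trace_sub, hσtr, hTP H1, hH1tr]
    simp
  have hKherm : K.IsHermitian := by
    exact herm_smul_real (by norm_num) (hσherm.sub (hHP H1 hH1herm))
  -- the two linear maps
  set T1 : Mat n →ₗ[ℂ] ℂ := Matrix.traceLinearMap (Fin n) ℂ ℂ with hT1
  set T2 : Mat n →ₗ[ℂ] ℂ := T1 ∘ₗ LinearMap.mulLeft ℂ (auxA n) with hT2
  set Ψ₁ : Mat n →ₗ[ℂ] Mat m := (2 : ℂ) • Φ - T1.smulRight σ + T2.smulRight K with hΨ₁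
  set Ψ₂ : Mat n →ₗ[ℂ] Mat m := T1.smulRight σ - T2.smulRight K with hΨ₂
  have hΨ₁app : ∀ X : Mat n, Ψ₁ X = (2:ℂ) • Φ X - X.trace • σ + (auxA n * X).trace • K := by
    intro X
    simp [hΨ₁, hT2, hT1]
  have hΨ₂app : ∀ X : Mat n, Ψ₂ X = X.trace • σ - (auxA n * X).trace • K := by
    intro X
    simp [hΨ₂, hT2, hT1]
  -- reality of traces against Hermitian matrices
  have htrR : ∀ X : Mat n, X.IsHermitian → star X.trace = X.trace := by
    intro X hX
    rw [← Matrix.trace_conjTranspose, hX]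
  have htrAR : ∀ X : Mat n, X.IsHermitian → star (auxA n * X).trace = (auxA n * X).trace := by
    intro X hX
    rw [← Matrix.trace_conjTranspose, Matrix.conjTranspose_mul, hX, (auxA_herm n),
      Matrix.trace_mul_comm]
  -- HP
  have hHP1 : IsHP Ψ₁ := by
    intro X hX
    rw [hΨ₁app]
    exact ((herm_smul_real (by norm_num) (hHP X hX)).sub
      (herm_smul_real (htrR X hX) hσherm)).add (herm_smul_real (htrAR X hX) hKherm)
  have hHP2 : IsHP Ψ₂ := by
    intro X hX
    rw [hΨ₂app]
    exact (herm_smul_real (htrR X hX) hσherm).sub (herm_smul_real (htrAR X hX) hKherm)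
  -- TP
  have hTP1 : IsTP Ψ₁ := by
    intro X
    rw [hΨ₁app, Matrix.trace_add, Matrix.trace_sub, Matrix.trace_smul, Matrix.trace_smul,
      Matrix.trace_smul, hTP, hσtr, hKtr]
    simp [smul_eq_mul]
    ring
  have hTP2 : IsTP Ψ₂ := by
    intro X
    rw [hΨ₂app, Matrix.trace_sub, Matrix.trace_smul, Matrix.trace_smul, hσtr, hKtr]
    simp [smul_eq_mul]
  -- the trace pairings at the two special densities
  have hAH1 : (auxA n * H1).trace = 1 := by
    have h1 : H1 = (((n:ℝ)⁻¹ : ℂ)) • (1 : Mat n) := by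
      rw [hH1, Matrix.smul_one_eq_diagonal]
      norm_cast
    rw [h1, mul_smul_comm, mul_one, Matrix.trace_smul, auxA_trace hn, smul_eq_mul]
    push_cast
    field_simp
  have hΨ₁H1 : Ψ₁ H1 = σ := by
    rw [hΨ₁app, hH1tr, hAH1, one_smul, one_smul, hK]
    module
  have hΨ₂H2 : Ψ₂ (auxH2 n) = σ := by
    rw [hΨ₂app, auxH2_trace hn, auxA_mul_H2_trace hn, one_smul, zero_smul, sub_zero]
  -- SP
  have hSP1 : IsSP Ψ₁ := ⟨H1, hH1pd, hH1tr, by rw [hΨ₁H1]; exact hσpd, by rw [hΨ₁H1, hσtr]⟩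
  have hSP2 : IsSP Ψ₂ := ⟨auxH2 n, auxH2_posDef hn, auxH2_trace hn,
    by rw [hΨ₂H2]; exact hσpd, by rw [hΨ₂H2, hσtr]⟩
  refine ⟨Ψ₁, Ψ₂, hHP1, hTP1, hSP1, hHP2, hTP2, hSP2, ?_⟩
  have hsum : Ψ₁ + Ψ₂ = (2:ℂ) • Φ := by
    rw [hΨ₁, hΨ₂]; abel
  rw [hsum, smul_smul]
  norm_num
end
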